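/- arXiv:2602.04128 — 3 statements merged into one kernel-verified Lean document; each statement's English description precedes it below -/
import Mathlib

section
/- For every real z with 0 < z < 1, log((1 − √(1−z))/(1 + √(1−z))) = log(z/4) + ∑_{n=1}^∞ C(2n,n) · zⁿ/(4ⁿ · n), and the series on the right converges. -/
open Real Set

namespace Stmt7

noncomputable def c (n : ℕ) : ℝ := (Nat.choose (2 * n) n : ℝ) / 4 ^ n

lemma c_zero : c 0 = 1 := by simp [c]

lemma c_nonneg (n : ℕ) : 0 ≤ c n :=
  div_nonneg (Nat.cast_nonneg _) (by positivity)

lemma c_le_one (n : ℕ) : c n ≤ 1 := by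
  have h1 : Nat.choose (2*n) n ≤ Nat.choose (2*n+1) n :=
    Nat.choose_le_choose n (Nat.le_succ _)
  have h2 := Nat.choose_middle_le_pow n
  have h : (Nat.choose (2*n) n : ℝ) ≤ 4 ^ n := by exact_mod_cast le_trans h1 h2
  rw [c, div_le_one (by positivity)]
  exact h

lemma c_rec (n : ℕ) : 2 * ((n:ℝ)+1) * c (n+1) = (2*n+1) * c n := by
  have h := Nat.succ_mul_centralBinom_succ n
  simp only [Nat.centralBinom] at h
  have h' : ((n:ℝ)+1) * (Nat.choose (2*(n+1)) (n+1) : ℝ)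
      = 2*(2*(n:ℝ)+1) * (Nat.choose (2*n) n : ℝ) := by exact_mod_cast h
  simp only [c]
  rw [pow_succ]
  field_simp
  linear_combination 2 * h'


noncomputable def g0 (x : ℝ) : ℝ := ∑' n : ℕ, c n * x ^ n
noncomputable def D (x : ℝ) : ℝ := ∑' n : ℕ, c n * ((n:ℝ) * x ^ (n-1))
noncomputable def E (x : ℝ) : ℝ := ∑' n : ℕ, c (n+1) * x ^ n
noncomputable def F (x : ℝ) : ℝ :=
  ∑' n : ℕ, (Nat.choose (2 * (n + 1)) (n + 1) : ℝ) * x ^ (n + 1) /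
    (4 ^ (n + 1) * ((n : ℝ) + 1))

lemma summable_of_abs_le_geom {x : ℝ} (hx : |x| < 1) {f : ℕ → ℝ}
    (hf : ∀ n, |f n| ≤ |x| ^ n) : Summable f :=
  Summable.of_norm_bounded (summable_geometric_of_lt_one (abs_nonneg x) hx) hf

lemma summable_g0 {x : ℝ} (hx : |x| < 1) : Summable (fun n : ℕ => c n * x ^ n) := by
  refine summable_of_abs_le_geom hx fun n => ?_
  rw [abs_mul, abs_pow]
  calc |c n| * |x| ^ n ≤ 1 * |x| ^ n := by
        gcongr
        · rw [abs_of_nonneg (c_nonneg n)]; exact c_le_one n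
    _ = |x| ^ n := one_mul _

lemma summable_E {x : ℝ} (hx : |x| < 1) : Summable (fun n : ℕ => c (n+1) * x ^ n) := by
  refine summable_of_abs_le_geom hx fun n => ?_
  rw [abs_mul, abs_pow]
  calc |c (n+1)| * |x| ^ n ≤ 1 * |x| ^ n := by
        gcongr
        · rw [abs_of_nonneg (c_nonneg _)]; exact c_le_one _
    _ = |x| ^ n := one_mul _

lemma summable_u {r : ℝ} (h0 : 0 < r) (h1 : r < 1) :
    Summable (fun n : ℕ => (n:ℝ) * r ^ (n-1)) := by
  have h := summable_pow_mul_geometric_of_norm_lt_one (R := ℝ) 1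
    (r := r) (by rwa [Real.norm_eq_abs, abs_of_pos h0])
  refine (h.mul_left r⁻¹).congr fun n => ?_
  cases n with
  | zero => simp
  | succ m =>
      have : r ≠ 0 := ne_of_gt h0
      simp only [pow_one, Nat.add_sub_cancel]
      rw [pow_succ]
      field_simp

lemma summable_D {x : ℝ} (hx : |x| < 1) :
    Summable (fun n : ℕ => c n * ((n:ℝ) * x ^ (n-1))) := by
  set r : ℝ := (|x|+1)/2 with hr
  have hr0 : 0 < r := by positivity
  have hr1 : r < 1 := by rw [hr]; linarith
  have hxr : |x| ≤ r := by rw [hr]; linarith [abs_nonneg x]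
  refine Summable.of_norm_bounded (summable_u hr0 hr1) fun n => ?_
  rw [Real.norm_eq_abs, abs_mul, abs_mul, abs_pow, Nat.abs_cast]
  calc |c n| * ((n:ℝ) * |x| ^ (n-1)) ≤ 1 * ((n:ℝ) * r ^ (n-1)) := by
        gcongr
        · rw [abs_of_nonneg (c_nonneg n)]; exact c_le_one n
    _ = (n:ℝ) * r ^ (n-1) := one_mul _

lemma hasDerivAt_g0 {x : ℝ} (hx : |x| < 1) : HasDerivAt g0 (D x) x := by
  set r : ℝ := (|x|+1)/2 with hr
  have hr0 : 0 < r := by positivity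
  have hxr : |x| < r := by rw [hr]; linarith
  have hr1 : r < 1 := by rw [hr]; linarith
  have hu : Summable (fun n : ℕ => (n:ℝ) * r ^ (n-1)) := summable_u hr0 hr1
  have h := hasDerivAt_tsum_of_isPreconnected (F := ℝ) hu (isOpen_Ioo (a := -r) (b := r))
      ((convex_Ioo (-r) r).isPreconnected)
      (g := fun (n : ℕ) (y : ℝ) => c n * y ^ n)
      (g' := fun (n : ℕ) (y : ℝ) => c n * ((n:ℝ) * y ^ (n-1)))
      (fun n y _ => (hasDerivAt_pow n y).const_mul (c n))
      (fun n y hy => ?_) (y₀ := 0) ?_ ?_ (y := x) ?_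
  · exact h
  · rw [Real.norm_eq_abs, abs_mul, abs_mul, abs_pow, Nat.abs_cast]
    have hy' : |y| ≤ r := le_of_lt (abs_lt.2 ⟨hy.1, hy.2⟩)
    calc |c n| * ((n:ℝ) * |y| ^ (n-1)) ≤ 1 * ((n:ℝ) * r ^ (n-1)) := by
          gcongr
          · rw [abs_of_nonneg (c_nonneg n)]; exact c_le_one n
      _ = (n:ℝ) * r ^ (n-1) := one_mul _
  · exact ⟨by linarith, hr0⟩
  · exact summable_g0 (by simp)
  · exact ⟨neg_lt_of_abs_lt hxr, lt_of_abs_lt hxr⟩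

lemma twoD {x : ℝ} (hx : |x| < 1) : 2 * (1-x) * D x = g0 x := by
  have hA : Summable (fun n : ℕ => (2*(n:ℝ)+1) * c n * x ^ n) := by
    have h1 := summable_pow_mul_geometric_of_norm_lt_one (R := ℝ) 1
      (r := |x|) (by rwa [Real.norm_eq_abs, abs_abs])
    have h2 : Summable (fun n : ℕ => 2 * ((n:ℝ)^1 * |x| ^ n) + |x| ^ n) :=
      (h1.mul_left 2).add (summable_geometric_of_lt_one (abs_nonneg x) hx)
    refine Summable.of_norm_bounded h2 fun n => ?_
    rw [Real.norm_eq_abs, abs_mul, abs_mul, abs_pow]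
    have h3 : |2*(n:ℝ)+1| = 2*(n:ℝ)+1 := abs_of_nonneg (by positivity)
    rw [h3, pow_one]
    have h4 : |c n| ≤ 1 := by rw [abs_of_nonneg (c_nonneg n)]; exact c_le_one n
    calc (2*(n:ℝ)+1) * |c n| * |x| ^ n ≤ (2*(n:ℝ)+1) * 1 * |x| ^ n := by
          gcongr
      _ = 2 * ((n:ℝ) * |x| ^ n) + |x| ^ n := by ring
  have hB : Summable (fun n : ℕ => 2*(n:ℝ) * c n * x ^ n) := by
    have h1 := summable_pow_mul_geometric_of_norm_lt_one (R := ℝ) 1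
      (r := |x|) (by rwa [Real.norm_eq_abs, abs_abs])
    refine Summable.of_norm_bounded (h1.mul_left 2) fun n => ?_
    rw [Real.norm_eq_abs, abs_mul, abs_mul, abs_pow, pow_one]
    have h3 : |2*(n:ℝ)| = 2*(n:ℝ) := abs_of_nonneg (by positivity)
    have h4 : |c n| ≤ 1 := by rw [abs_of_nonneg (c_nonneg n)]; exact c_le_one n
    rw [h3]
    calc 2*(n:ℝ) * |c n| * |x| ^ n ≤ 2*(n:ℝ) * 1 * |x| ^ n := by gcongr
      _ = 2 * ((n:ℝ) * |x| ^ n) := by ring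
  have hD : D x = (∑' n : ℕ, (2*(n:ℝ)+1) * c n * x ^ n) / 2 := by
    rw [D, Summable.tsum_eq_zero_add (summable_D hx)]
    simp only [Nat.cast_zero, zero_mul, mul_zero, zero_add, Nat.cast_add,
      Nat.cast_one, Nat.add_sub_cancel]
    rw [← tsum_div_const]
    exact tsum_congr fun n => by linear_combination (x^n/2) * c_rec n
  have hxA : x * (∑' n : ℕ, (2*(n:ℝ)+1) * c n * x ^ n)
      = ∑' n : ℕ, 2*(n:ℝ) * c n * x ^ n := by
    rw [← tsum_mul_left, Summable.tsum_eq_zero_add hB]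
    simp only [Nat.cast_zero, mul_zero, zero_mul, zero_add, Nat.cast_add, Nat.cast_one]
    exact tsum_congr fun n => by linear_combination (-(x^(n+1))) * c_rec n
  calc 2*(1-x)*D x
      = (∑' n : ℕ, (2*(n:ℝ)+1) * c n * x ^ n)
        - x * (∑' n : ℕ, (2*(n:ℝ)+1) * c n * x ^ n) := by rw [hD]; ring
    _ = ∑' n : ℕ, ((2*(n:ℝ)+1) * c n * x ^ n - 2*(n:ℝ) * c n * x ^ n) := by
        rw [hxA, ← Summable.tsum_sub hA hB]
    _ = g0 x := tsum_congr fun n => by ring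

lemma g0_zero : g0 0 = 1 := by
  rw [g0, tsum_eq_single 0 (fun b hb => by simp [zero_pow hb])]
  simp [c]

lemma key1 {x : ℝ} (h0 : 0 ≤ x) (h1 : x < 1) : Real.sqrt (1-x) * g0 x = 1 := by
  have key : ∀ y ∈ Icc 0 x, HasDerivAt (fun t => Real.sqrt (1-t) * g0 t) 0 y := by
    intro y hy
    have hy1 : |y| < 1 := by
      rw [abs_lt]; exact ⟨by linarith [hy.1], by linarith [hy.2]⟩
    have hs0 : (0:ℝ) < 1 - y := by linarith [hy.2]
    have hspos : 0 < Real.sqrt (1-y) := Real.sqrt_pos.2 hs0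
    have hsq : Real.sqrt (1-y) ^ 2 = 1 - y := Real.sq_sqrt hs0.le
    have hder1 : HasDerivAt (fun t : ℝ => 1 - t) (-1) y := by
      exact (hasDerivAt_id' y).const_sub 1
    have hder2 : HasDerivAt (fun t => Real.sqrt (1-t)) (-1 / (2 * Real.sqrt (1-y))) y :=
      hder1.sqrt (ne_of_gt hs0)
    have hder3 := hder2.mul (hasDerivAt_g0 hy1)
    refine hder3.congr_deriv (Eq.symm ?_)
    have hDval : D y = g0 y / (2 * Real.sqrt (1-y) ^ 2) := by
      rw [hsq]
      have h2 := twoD hy1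
      field_simp
      linarith [h2]
    rw [hDval]
    field_simp
    linear_combination
  have hc : ContinuousOn (fun t => Real.sqrt (1-t) * g0 t) (Icc 0 x) :=
    fun y hy => ((key y hy).continuousAt.continuousWithinAt)
  have hconst := constant_of_has_deriv_right_zero hc
    (fun y hy => ((key y (Ico_subset_Icc_self hy)).hasDerivWithinAt)) x (right_mem_Icc.2 h0)
  simpa [g0_zero] using hconst


lemma key2 {x : ℝ} (h0 : 0 ≤ x) (h1 : x < 1) :
    E x = 1 / (Real.sqrt (1-x) * (1 + Real.sqrt (1-x))) := by
  have hx1 : |x| < 1 := by rw [abs_lt]; exact ⟨by linarith, h1⟩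
  have hs0 : (0:ℝ) < 1 - x := by linarith
  set s := Real.sqrt (1-x) with hs
  have hspos : 0 < s := Real.sqrt_pos.2 hs0
  have hsq : s ^ 2 = 1 - x := Real.sq_sqrt hs0.le
  rcases eq_or_lt_of_le h0 with h | h
  · have hx0 : x = 0 := h.symm
    subst hx0
    have hE0 : E 0 = c 1 := by
      rw [E, tsum_eq_single 0 (fun b hb => by simp [zero_pow hb])]
      simp
    rw [hE0]
    have : s = 1 := by simp [hs]
    rw [this]
    norm_num [c]
  · -- x > 0
    have hg0 : g0 x = 1 / s := by
      rw [eq_div_iff (ne_of_gt hspos)]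
      linear_combination key1 h0 h1
    have hshift : g0 x = 1 + x * E x := by
      rw [g0, Summable.tsum_eq_zero_add (summable_g0 hx1)]
      have hterm : ∀ n : ℕ, c (n+1) * x ^ (n+1) = x * (c (n+1) * x ^ n) :=
        fun n => by ring
      rw [pow_zero, mul_one, tsum_congr hterm, tsum_mul_left, c_zero, E]
    have hs1 : s < 1 := by
      rw [hs]
      have : (1:ℝ) - x < 1 := by linarith
      calc Real.sqrt (1-x) < Real.sqrt 1 := by
            exact Real.sqrt_lt_sqrt hs0.le this
        _ = 1 := Real.sqrt_one
    have h1s : (0:ℝ) < 1 - s := by linarith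
    have hEx : (1 - s^2) * E x = 1/s - 1 := by
      rw [hsq]
      have h5 := hshift
      rw [hg0] at h5
      linear_combination (-1) * h5
    have hEx' : s * ((1 - s^2) * E x) = 1 - s := by
      rw [hEx]
      field_simp
    rw [eq_div_iff (by positivity)]
    apply mul_left_cancel₀ (ne_of_gt h1s)
    linear_combination hEx'


lemma Fterm_eq (n : ℕ) (x : ℝ) :
    (Nat.choose (2 * (n + 1)) (n + 1) : ℝ) * x ^ (n + 1) / (4 ^ (n + 1) * ((n : ℝ) + 1))
      = (c (n+1) / ((n:ℝ)+1)) * x ^ (n+1) := by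
  have h1 : ((n:ℝ)+1) ≠ 0 := by positivity
  have h2 : ((4:ℝ)^(n+1)) ≠ 0 := by positivity
  simp only [c]
  field_simp

lemma summable_F {x : ℝ} (hx : |x| < 1) :
    Summable (fun n : ℕ =>
      (Nat.choose (2 * (n + 1)) (n + 1) : ℝ) * x ^ (n + 1) /
        (4 ^ (n + 1) * ((n : ℝ) + 1))) := by
  refine summable_of_abs_le_geom hx fun n => ?_
  rw [Fterm_eq, abs_mul, abs_pow, abs_div]
  have h1 : |c (n+1)| ≤ 1 := by rw [abs_of_nonneg (c_nonneg _)]; exact c_le_one _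
  have h2 : |((n:ℝ)+1)| = (n:ℝ)+1 := abs_of_nonneg (by positivity)
  have h3 : (1:ℝ) ≤ (n:ℝ)+1 := by
    have : (0:ℝ) ≤ (n:ℝ) := Nat.cast_nonneg n
    linarith
  have h4 : |c (n+1)| / |((n:ℝ)+1)| ≤ 1 := by
    rw [h2, div_le_one (by positivity)]
    linarith
  calc |c (n+1)| / |((n:ℝ)+1)| * |x| ^ (n+1)
      ≤ 1 * |x| ^ (n+1) := by gcongr
    _ = |x| ^ n * |x| := by rw [one_mul, pow_succ]
    _ ≤ |x| ^ n * 1 := by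
        have := le_of_lt hx
        gcongr
    _ = |x| ^ n := mul_one _

lemma hasDerivAt_F {x : ℝ} (hx : |x| < 1) : HasDerivAt F (E x) x := by
  set r : ℝ := (|x|+1)/2 with hr
  have hr0 : 0 < r := by positivity
  have hxr : |x| < r := by rw [hr]; linarith
  have hr1 : r < 1 := by rw [hr]; linarith
  have hu : Summable (fun n : ℕ => r ^ n) :=
    summable_geometric_of_lt_one hr0.le hr1
  have h := hasDerivAt_tsum_of_isPreconnected (F := ℝ) hu (isOpen_Ioo (a := -r) (b := r))
      ((convex_Ioo (-r) r).isPreconnected)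
      (g := fun (n : ℕ) (y : ℝ) =>
        (Nat.choose (2 * (n + 1)) (n + 1) : ℝ) * y ^ (n + 1) / (4 ^ (n + 1) * ((n : ℝ) + 1)))
      (g' := fun (n : ℕ) (y : ℝ) => c (n+1) * y ^ n)
      (fun n y _ => ?_)
      (fun n y hy => ?_) (y₀ := 0) ?_ ?_ (y := x) ?_
  · exact h
  · -- HasDerivAt of each term
    show HasDerivAt (fun y : ℝ =>
        (Nat.choose (2 * (n + 1)) (n + 1) : ℝ) * y ^ (n + 1) / (4 ^ (n + 1) * ((n : ℝ) + 1)))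
        (c (n+1) * y ^ n) y
    have heq : (fun y : ℝ =>
        (Nat.choose (2 * (n + 1)) (n + 1) : ℝ) * y ^ (n + 1) / (4 ^ (n + 1) * ((n : ℝ) + 1)))
        = fun y : ℝ => (c (n+1) / ((n:ℝ)+1)) * y ^ (n+1) := by
      funext t
      exact Fterm_eq n t
    rw [heq]
    have hval : c (n+1) * y ^ n
        = (c (n+1) / ((n:ℝ)+1)) * (((n:ℕ)+1 : ℝ) * y ^ n) := by
      have : ((n:ℝ)+1) ≠ 0 := by positivity
      field_simp
    rw [hval]
    have hp := (hasDerivAt_pow (n+1) y).const_mul (c (n+1) / ((n:ℝ)+1))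
    simpa using hp
  · -- bound
    rw [Real.norm_eq_abs, abs_mul, abs_pow]
    have hy' : |y| ≤ r := le_of_lt (abs_lt.2 ⟨hy.1, hy.2⟩)
    have h1 : |c (n+1)| ≤ 1 := by rw [abs_of_nonneg (c_nonneg _)]; exact c_le_one _
    calc |c (n+1)| * |y| ^ n ≤ 1 * r ^ n := by
          gcongr
      _ = r ^ n := one_mul _
  · exact ⟨by linarith, hr0⟩
  · exact summable_zero.congr fun n => by simp
  · exact ⟨neg_lt_of_abs_lt hxr, lt_of_abs_lt hxr⟩

lemma F_zero : F 0 = 0 := by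
  rw [F]
  convert tsum_zero with n
  simp

lemma key3 {z : ℝ} (h0 : 0 < z) (h1 : z < 1) :
    F z = -(2 * Real.log ((1 + Real.sqrt (1-z)) / 2)) := by
  have key : ∀ y ∈ Icc 0 z,
      HasDerivAt (fun t => F t + 2 * Real.log ((1 + Real.sqrt (1-t)) / 2)) 0 y := by
    intro y hy
    have hy1 : |y| < 1 := by
      rw [abs_lt]; exact ⟨by linarith [hy.1], by linarith [hy.2]⟩
    have hs0 : (0:ℝ) < 1 - y := by linarith [hy.2]
    have hspos : 0 < Real.sqrt (1-y) := Real.sqrt_pos.2 hs0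
    have hsq : Real.sqrt (1-y) ^ 2 = 1 - y := Real.sq_sqrt hs0.le
    have hder1 : HasDerivAt (fun t : ℝ => 1 - t) (-1) y := by
      exact (hasDerivAt_id' y).const_sub 1
    have hder2 : HasDerivAt (fun t => Real.sqrt (1-t)) (-1 / (2 * Real.sqrt (1-y))) y :=
      hder1.sqrt (ne_of_gt hs0)
    have hder3 : HasDerivAt (fun t => (1 + Real.sqrt (1-t)) / 2)
        ((-1 / (2 * Real.sqrt (1-y))) / 2) y :=
      by simpa using ((hasDerivAt_const y (1:ℝ)).add hder2).div_const 2
    have hpos : 0 < (1 + Real.sqrt (1-y)) / 2 := by positivity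
    have hder4 : HasDerivAt (fun t => Real.log ((1 + Real.sqrt (1-t)) / 2))
        (((-1 / (2 * Real.sqrt (1-y))) / 2) / ((1 + Real.sqrt (1-y)) / 2)) y :=
      hder3.log (ne_of_gt hpos)
    have hder5 := (hasDerivAt_F hy1).add (hder4.const_mul 2)
    refine hder5.congr_deriv (Eq.symm ?_)
    have hEy : E y = 1 / (Real.sqrt (1-y) * (1 + Real.sqrt (1-y))) := key2 hy.1 (by linarith [hy.2])
    rw [hEy]
    have h1s : (0:ℝ) < 1 + Real.sqrt (1-y) := by positivity
    field_simp
    ring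
  have hc : ContinuousOn (fun t => F t + 2 * Real.log ((1 + Real.sqrt (1-t)) / 2)) (Icc 0 z) :=
    fun y hy => ((key y hy).continuousAt.continuousWithinAt)
  have hconst := constant_of_has_deriv_right_zero hc
    (fun y hy => ((key y (Ico_subset_Icc_self hy)).hasDerivWithinAt)) z (right_mem_Icc.2 h0.le)
  simp only [F_zero, sub_zero, Real.sqrt_one] at hconst
  norm_num at hconst
  linarith [hconst]

end Stmt7

/-- For `z ∈ (0,1)`,
`log((1−√(1−z))/(1+√(1−z))) = log(z/4) + ∑_{n≥1} C(2n,n) zⁿ/(4ⁿ n)`,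
the series converging. -/
theorem stmt_7 (z : ℝ) (hz : z ∈ Set.Ioo (0 : ℝ) 1) :
    HasSum
      (fun n : ℕ => (Nat.choose (2 * (n + 1)) (n + 1) : ℝ) * z ^ (n + 1) /
        (4 ^ (n + 1) * ((n : ℝ) + 1)))
      (Real.log ((1 - Real.sqrt (1 - z)) / (1 + Real.sqrt (1 - z))) - Real.log (z / 4)) := by
  obtain ⟨hz0, hz1⟩ := hz
  have hzabs : |z| < 1 := by rw [abs_lt]; exact ⟨by linarith, hz1⟩
  have hsum := Stmt7.summable_F hzabs
  rw [hsum.hasSum_iff]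
  show Stmt7.F z = _
  rw [Stmt7.key3 hz0 hz1]
  set s := Real.sqrt (1 - z) with hs
  have h1z : (0:ℝ) < 1 - z := by linarith
  have hspos : 0 < s := Real.sqrt_pos.2 h1z
  have hsq : s ^ 2 = 1 - z := Real.sq_sqrt h1z.le
  have hs1 : s < 1 := by
    rw [hs]
    calc Real.sqrt (1 - z) < Real.sqrt 1 := Real.sqrt_lt_sqrt h1z.le (by linarith)
      _ = 1 := Real.sqrt_one
  have h1s : (0:ℝ) < 1 - s := by linarith
  have h1s' : (0:ℝ) < 1 + s := by linarith
  have hzs : z = (1 - s) * (1 + s) := by linear_combination hsq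
  rw [Real.log_div (ne_of_gt h1s) (ne_of_gt h1s'),
    Real.log_div (ne_of_gt hz0) (by norm_num : (4:ℝ) ≠ 0),
    Real.log_div (ne_of_gt h1s') (by norm_num : (2:ℝ) ≠ 0)]
  rw [hzs, Real.log_mul (ne_of_gt h1s) (ne_of_gt h1s')]
  have h4 : Real.log 4 = 2 * Real.log 2 := by
    rw [show (4:ℝ) = 2^2 by norm_num, Real.log_pow]
    push_cast
    ring
  rw [h4]
  ring
end

section
/- For every natural number n, the rational number (30n)! · n! / ((15n)! · (10n)! · (6n)!) is an integer. -/
lemma aux_div_key (m q : ℕ) :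
    15 * m / q + 10 * m / q + 6 * m / q ≤ 30 * m / q + m / q := by
  rcases Nat.eq_zero_or_pos q with h | h
  · simp [h]
  have h2 : 15 * m / q = (30 * m / q) / 2 := by
    rw [Nat.div_div_eq_div_mul, show 30 * m = 15 * m * 2 by ring,
      Nat.mul_div_mul_right _ _ (by norm_num)]
  have h3 : 10 * m / q = (30 * m / q) / 3 := by
    rw [Nat.div_div_eq_div_mul, show 30 * m = 10 * m * 3 by ring,
      Nat.mul_div_mul_right _ _ (by norm_num)]
  have h5 : 6 * m / q = (30 * m / q) / 5 := by
    rw [Nat.div_div_eq_div_mul, show 30 * m = 6 * m * 5 by ring,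
      Nat.mul_div_mul_right _ _ (by norm_num)]
  have h30 : m / q = (30 * m / q) / 30 := by
    rw [Nat.div_div_eq_div_mul, show 30 * m = m * 30 by ring,
      Nat.mul_div_mul_right _ _ (by norm_num)]
  rw [h2, h3, h5, h30]
  omega

/-- `(30n)!·n! / ((15n)!(10n)!(6n)!)` is an integer for every `n`. -/
theorem stmt_9 (n : ℕ) :
    (Nat.factorial (15 * n) * Nat.factorial (10 * n) * Nat.factorial (6 * n)) ∣
      (Nat.factorial (30 * n) * Nat.factorial n) := by
  have hne : ∀ k : ℕ, Nat.factorial k ≠ 0 := fun k => Nat.factorial_ne_zero k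
  rw [← Nat.factorization_le_iff_dvd (by positivity) (by positivity)]
  intro p
  by_cases hp : p.Prime
  · have hb : ∀ k : ℕ, k ≤ 30 * n → Nat.log p k < 30 * n + 1 :=
      fun k hk => lt_of_le_of_lt (le_trans (Nat.log_le_self p k) hk) (Nat.lt_succ_self _)
    rw [Nat.factorization_mul (hne _) (hne _),
      Nat.factorization_mul (mul_ne_zero (hne _) (hne _)) (hne _),
      Nat.factorization_mul (hne _) (hne _)]
    simp only [Finsupp.coe_add, Pi.add_apply]
    haveI : Fact p.Prime := ⟨hp⟩
    simp only [Nat.factorization_def _ hp]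
    rw [padicValNat_factorial (hb (15 * n) (by omega)),
      padicValNat_factorial (hb (10 * n) (by omega)),
      padicValNat_factorial (hb (6 * n) (by omega)),
      padicValNat_factorial (hb (30 * n) (by omega)),
      padicValNat_factorial (hb n (by omega)),
      ← Finset.sum_add_distrib, ← Finset.sum_add_distrib, ← Finset.sum_add_distrib]
    exact Finset.sum_le_sum fun i _ => aux_div_key n (p ^ i)
  · simp [Nat.factorization_eq_zero_of_not_prime _ hp]
end

section
/- Let φ = (x − y)(1 + x⁻¹)(1 + y⁻¹) be a Laurent polynomial in ℚ[x^{±1}, y^{±1}]. Then for every natural number n, the constant term (coefficient of x⁰y⁰) of φⁿ equals 0 if n is odd, and equals (−1)^m · (3m)!/(m!)³ if n = 2m is even. -/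
open AddMonoidAlgebra

/-- The Laurent monomial `x^a y^b` in `ℚ[x^{±1}, y^{±1}]`,
modeled as the monoid algebra of `ℤ × ℤ` over `ℚ`. -/
noncomputable def lmono (a b : ℤ) : AddMonoidAlgebra ℚ (ℤ × ℤ) :=
  AddMonoidAlgebra.single (a, b) 1

/-- `φ = (x − y)(1 + x⁻¹)(1 + y⁻¹)`. -/
noncomputable def phi : AddMonoidAlgebra ℚ (ℤ × ℤ) :=
  (lmono 1 0 - lmono 0 1) * (1 + lmono (-1) 0) * (1 + lmono 0 (-1))

open Finset

lemma lmono_mul (a b c d : ℤ) : lmono a b * lmono c d = lmono (a+c) (b+d) := by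
  simp [lmono, AddMonoidAlgebra.single_mul_single, Prod.mk_add_mk]

lemma lmono_zero : lmono 0 0 = 1 := by
  simp [lmono, AddMonoidAlgebra.one_def]; rfl

lemma lmono_pow (a b : ℤ) (n : ℕ) : lmono a b ^ n = lmono (n*a) (n*b) := by
  simp [lmono, AddMonoidAlgebra.single_pow, Prod.smul_mk, nsmul_eq_mul]

noncomputable def Pp : AddMonoidAlgebra ℚ (ℤ × ℤ) :=
  (lmono 1 0 - lmono 0 1) * (1 + lmono 1 0) * (1 + lmono 0 1)

lemma phi_eq : phi = Pp * lmono (-1) (-1) := by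
  have e1 : (1 : AddMonoidAlgebra ℚ (ℤ × ℤ)) + lmono (-1) 0 = (1 + lmono 1 0) * lmono (-1) 0 := by
    rw [add_mul, one_mul, lmono_mul]; norm_num [lmono_zero, add_comm]
  have e2 : (1 : AddMonoidAlgebra ℚ (ℤ × ℤ)) + lmono 0 (-1) = (1 + lmono 0 1) * lmono 0 (-1) := by
    rw [add_mul, one_mul, lmono_mul]; norm_num [lmono_zero, add_comm]
  rw [phi, e1, e2, Pp]
  have e3 : lmono (-1) 0 * lmono 0 (-1) = lmono (-1) (-1) := by rw [lmono_mul]; norm_num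
  rw [← e3]; ring

lemma phi_apply (n : ℕ) : (phi ^ n).coeff (0, 0) = (Pp ^ n).coeff ((n : ℤ), (n : ℤ)) := by
  rw [phi_eq, mul_pow, lmono_pow]
  have : (lmono (↑n * -1) (↑n * -1)) = AddMonoidAlgebra.single ((↑n * -1, ↑n * -1) : ℤ × ℤ) (1:ℚ) := rfl
  rw [this, AddMonoidAlgebra.coeff_mul_single_apply]
  norm_num

lemma expandA (n : ℕ) : (lmono 1 0 - lmono 0 1) ^ n =
    ∑ k ∈ range (n+1), AddMonoidAlgebra.single (((k:ℤ), ((n-k : ℕ):ℤ)) : ℤ×ℤ)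
      ((-1:ℚ)^(n-k) * (n.choose k : ℚ)) := by
  rw [sub_eq_add_neg, add_pow]
  refine Finset.sum_congr rfl fun k hk => ?_
  have h1 : (lmono 1 0) ^ k = AddMonoidAlgebra.single (((k:ℤ),(0:ℤ)) : ℤ×ℤ) (1:ℚ) := by
    rw [lmono_pow]; norm_num [lmono]
  have hneg : -lmono 0 1 = AddMonoidAlgebra.single (((0:ℤ),(1:ℤ)) : ℤ×ℤ) (-1:ℚ) := by
    rw [lmono]; rw [← AddMonoidAlgebra.single_neg]
  have h2 : (-lmono 0 1) ^ (n-k)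
      = AddMonoidAlgebra.single (((0:ℤ),((n-k:ℕ):ℤ)) : ℤ×ℤ) ((-1:ℚ)^(n-k)) := by
    rw [hneg, AddMonoidAlgebra.single_pow]
    congr 1
    simp [Prod.smul_mk, nsmul_eq_mul]
  rw [h1, h2, AddMonoidAlgebra.natCast_def, AddMonoidAlgebra.single_mul_single,
    AddMonoidAlgebra.single_mul_single]
  congr 1
  · simp
  · ring

lemma expandB (n : ℕ) : ((1 : AddMonoidAlgebra ℚ (ℤ × ℤ)) + lmono 1 0) ^ n =
    ∑ i ∈ range (n+1), AddMonoidAlgebra.single (((i:ℤ), (0:ℤ)) : ℤ×ℤ) ((n.choose i : ℚ)) := by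
  rw [add_comm, add_pow]
  refine Finset.sum_congr rfl fun i hi => ?_
  have h1 : (lmono 1 0) ^ i = AddMonoidAlgebra.single (((i:ℤ),(0:ℤ)) : ℤ×ℤ) (1:ℚ) := by
    rw [lmono_pow]; norm_num [lmono]
  rw [one_pow, mul_one, h1, AddMonoidAlgebra.natCast_def, AddMonoidAlgebra.single_mul_single]
  norm_num

lemma expandC (n : ℕ) : ((1 : AddMonoidAlgebra ℚ (ℤ × ℤ)) + lmono 0 1) ^ n =
    ∑ j ∈ range (n+1), AddMonoidAlgebra.single (((0:ℤ), (j:ℤ)) : ℤ×ℤ) ((n.choose j : ℚ)) := by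
  rw [add_comm, add_pow]
  refine Finset.sum_congr rfl fun j hj => ?_
  have h1 : (lmono 0 1) ^ j = AddMonoidAlgebra.single (((0:ℤ),(j:ℤ)) : ℤ×ℤ) (1:ℚ) := by
    rw [lmono_pow]; norm_num [lmono]
  rw [one_pow, mul_one, h1, AddMonoidAlgebra.natCast_def, AddMonoidAlgebra.single_mul_single]
  norm_num

lemma Pp_apply (n : ℕ) : (Pp ^ n).coeff ((n:ℤ),(n:ℤ))
    = ∑ k ∈ range (n+1), (-1:ℚ)^(n-k) * (n.choose k : ℚ)^3 := by
  rw [Pp, mul_pow, mul_pow, expandA, expandB, expandC, Finset.sum_mul_sum]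
  simp only [Finset.sum_mul, Finset.mul_sum, AddMonoidAlgebra.single_mul_single, Prod.mk_add_mk]
  simp only [AddMonoidAlgebra.coeff_sum, AddMonoidAlgebra.coeff_single]
  rw [Finset.sum_apply']
  refine Finset.sum_congr rfl fun j hj => ?_
  have hj' : j ≤ n := Nat.lt_succ_iff.mp (Finset.mem_range.mp hj)
  rw [Finset.sum_apply']
  rw [Finset.sum_eq_single j]
  · rw [Finset.sum_apply']
    rw [Finset.sum_eq_single (n-j)]
    · rw [Finsupp.single_apply, if_pos, Nat.choose_symm hj']
      · ring
      · rw [Prod.mk.injEq]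
        constructor <;> omega
    · intro i hi hik
      rw [Finsupp.single_apply, if_neg]
      intro hcon
      rw [Prod.mk.injEq] at hcon
      have := hcon.1
      omega
    · intro hcon
      exact absurd (Finset.mem_range.mpr (by omega)) hcon
  · intro a ha hak
    have ha' : a ≤ n := Nat.lt_succ_iff.mp (Finset.mem_range.mp ha)
    rw [Finset.sum_apply']
    refine Finset.sum_eq_zero fun i hi => ?_
    rw [Finsupp.single_apply, if_neg]
    intro hcon
    rw [Prod.mk.injEq] at hcon
    have := hcon.2
    omega
  · intro hcon
    exact absurd hj hcon

noncomputable def S (n : ℕ) : ℚ := ∑ k ∈ range (n+1), (-1:ℚ)^k * (n.choose k : ℚ)^3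

lemma coeff_eq (n : ℕ) : (phi ^ n).coeff (0, 0) = (-1:ℚ)^n * S n := by
  rw [phi_apply, Pp_apply, S, Finset.mul_sum]
  refine Finset.sum_congr rfl fun k hk => ?_
  have hk' : k ≤ n := Nat.lt_succ_iff.mp (Finset.mem_range.mp hk)
  have hab : (-1:ℚ)^(n-k) * (-1:ℚ)^k = (-1:ℚ)^n := by
    rw [← pow_add, Nat.sub_add_cancel hk']
  have hsq : (-1:ℚ)^k * (-1:ℚ)^k = 1 := by
    rw [← pow_add]
    exact Even.neg_one_pow ⟨k, rfl⟩
  linear_combination ((-1:ℚ)^k * (n.choose k:ℚ)^3) * hab - ((-1:ℚ)^(n-k) * (n.choose k:ℚ)^3) * hsq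

lemma S_odd (m : ℕ) : S (2*m+1) = 0 := by
  have h := Finset.sum_range_reflect (fun k => (-1:ℚ)^k * ((2*m+1).choose k : ℚ)^3) (2*m+2)
  have key : ∀ j ∈ range (2*m+2), (-1:ℚ)^(2*m+2-1-j) * ((2*m+1).choose (2*m+2-1-j) : ℚ)^3
      = -((-1:ℚ)^j * ((2*m+1).choose j : ℚ)^3) := by
    intro j hj
    have hj' : j ≤ 2*m+1 := Nat.lt_succ_iff.mp (Finset.mem_range.mp hj)
    have e1 : 2*m+2-1-j = 2*m+1-j := by omega
    rw [e1, Nat.choose_symm hj']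
    have hab : (-1:ℚ)^(2*m+1-j) * (-1:ℚ)^j = -1 := by
      rw [← pow_add, Nat.sub_add_cancel hj']
      exact Odd.neg_one_pow ⟨m, by ring⟩
    have hsq : (-1:ℚ)^j * (-1:ℚ)^j = 1 := by
      rw [← pow_add]
      exact Even.neg_one_pow ⟨j, rfl⟩
    linear_combination ((-1:ℚ)^j * ((2*m+1).choose j:ℚ)^3) * hab
      - ((-1:ℚ)^(2*m+1-j) * ((2*m+1).choose j:ℚ)^3) * hsq
  rw [Finset.sum_congr rfl key, Finset.sum_neg_distrib] at h
  have hS : S (2*m+1) = ∑ j ∈ range (2*m+2), (-1:ℚ)^j * ((2*m+1).choose j : ℚ)^3 := rfl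
  rw [hS]
  linarith [h]

lemma hh (n k : ℕ) (h : k ≤ n) : (n+1-k) * ((n+1).choose k) = (n+1) * (n.choose k) := by
  have h1 := Nat.add_one_mul_choose_eq n (n-k)
  rw [Nat.choose_symm h] at h1
  have h2 : n - k + 1 = n + 1 - k := by omega
  rw [h2] at h1
  rw [Nat.choose_symm (show k ≤ n+1 by omega)] at h1
  simpa [mul_comm] using h1.symm

lemma h1q (m k : ℕ) : ((k:ℚ)+1) * ((2*m+2).choose (k+1) : ℚ)
    = (2*(m:ℚ)+2-(k:ℚ)) * ((2*m+2).choose k : ℚ) := by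
  by_cases hk : k ≤ 2*m+1
  · have h := Nat.choose_succ_right_eq (2*m+2) k
    have hc := congrArg (Nat.cast : ℕ → ℚ) h
    push_cast [Nat.cast_sub (show k ≤ 2*m+2 by omega)] at hc
    linear_combination hc
  · push_neg at hk
    rcases eq_or_lt_of_le (show 2*m+2 ≤ k by omega) with h|h
    · rw [← h]
      rw [Nat.choose_eq_zero_of_lt (show 2*m+2 < 2*m+2+1 by omega)]
      push_cast
      ring
    · rw [Nat.choose_eq_zero_of_lt (show 2*m+2 < k+1 by omega),
        Nat.choose_eq_zero_of_lt (show 2*m+2 < k by omega)]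
      push_cast
      ring

lemma h2q (m k : ℕ) : (2*(m:ℚ)+2-(k:ℚ)) * (2*(m:ℚ)+1-(k:ℚ)) * ((2*m+2).choose k : ℚ)
    = (2*(m:ℚ)+2) * (2*(m:ℚ)+1) * ((2*m).choose k : ℚ) := by
  by_cases hk : k ≤ 2*m
  · have f1 := hh (2*m+1) k (by omega)
    have f2 := hh (2*m) k hk
    have f1c := congrArg (Nat.cast : ℕ → ℚ) f1
    have f2c := congrArg (Nat.cast : ℕ → ℚ) f2
    push_cast [Nat.cast_sub (show k ≤ 2*m+1+1 by omega), Nat.cast_sub (show k ≤ 2*m+1 by omega)] at f1c f2c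
    linear_combination (2*(m:ℚ)+1-(k:ℚ)) * f1c + (2*(m:ℚ)+2) * f2c
  · push_neg at hk
    have hB : (2*m).choose k = 0 := Nat.choose_eq_zero_of_lt (by omega)
    rw [hB]
    rcases eq_or_lt_of_le (show 2*m+1 ≤ k by omega) with h|h
    · rw [← h]; push_cast; ring
    · rcases eq_or_lt_of_le (show 2*m+2 ≤ k by omega) with h'|h'
      · rw [← h']; push_cast; ring
      · rw [Nat.choose_eq_zero_of_lt (show 2*m+2 < k by omega)]
        push_cast; ring

noncomputable def P3q (M K : ℚ) : ℚ := (-116 + 207*K - 147*K^2 + 48*K^3 - 6*K^4 + M*(-784 + 1113*K - 594*K^2 + 132*K^3 - 9*K^4) + M^2*(-2084 + 2214*K - 792*K^2 + 90*K^3) + M^3*(-2728 + 1932*K - 348*K^2) + M^4*(-1760 + 624*K) + M^5*(-448))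

noncomputable def gw (m k : ℕ) : ℚ :=
  (-1:ℚ)^k * (k:ℚ)^3 * (((2*m+2).choose k : ℚ))^3 * P3q (m:ℚ) (k:ℚ)

lemma key (m k : ℕ) :
    2*(((2*(m:ℚ)+2)*(2*(m:ℚ)+1))^3)*(((m:ℚ)+1)^2 * (-1:ℚ)^k * (((2*m+2).choose k : ℚ))^3
      + 3*(3*(m:ℚ)+1)*(3*(m:ℚ)+2) * (-1:ℚ)^k * (((2*m).choose k : ℚ))^3)
    = gw m (k+1) - gw m k := by
  have h1c : (((k:ℚ)+1) * ((2*m+2).choose (k+1) : ℚ))^3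
      = ((2*(m:ℚ)+2-(k:ℚ)) * ((2*m+2).choose k : ℚ))^3 := by rw [h1q]
  have h2c : ((2*(m:ℚ)+2-(k:ℚ)) * (2*(m:ℚ)+1-(k:ℚ)) * ((2*m+2).choose k : ℚ))^3
      = ((2*(m:ℚ)+2) * (2*(m:ℚ)+1) * ((2*m).choose k : ℚ))^3 := by
    rw [mul_assoc, mul_assoc]
    rw [show (2*(m:ℚ)+1-(k:ℚ)) * ((2*m+2).choose k : ℚ) = ((2*(m:ℚ)+2-(k:ℚ))-1) * ((2*m+2).choose k : ℚ) by ring]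
    rw [show (2*(m:ℚ)+2-(k:ℚ)) * (((2*(m:ℚ)+2-(k:ℚ))-1) * ((2*m+2).choose k : ℚ)) = (2*(m:ℚ)+2-(k:ℚ)) * (2*(m:ℚ)+1-(k:ℚ)) * ((2*m+2).choose k : ℚ) by ring]
    rw [h2q]
    ring
  simp only [gw, P3q]
  push_cast
  simp only [pow_succ]
  linear_combination ((-1:ℚ)^k * (-116 + 207*((k:ℚ)+1) - 147*((k:ℚ)+1)^2 + 48*((k:ℚ)+1)^3 - 6*((k:ℚ)+1)^4 + (m:ℚ)*(-784 + 1113*((k:ℚ)+1) - 594*((k:ℚ)+1)^2 + 132*((k:ℚ)+1)^3 - 9*((k:ℚ)+1)^4) + (m:ℚ)^2*(-2084 + 2214*((k:ℚ)+1) - 792*((k:ℚ)+1)^2 + 90*((k:ℚ)+1)^3) + (m:ℚ)^3*(-2728 + 1932*((k:ℚ)+1) - 348*((k:ℚ)+1)^2) + (m:ℚ)^4*(-1760 + 624*((k:ℚ)+1)) + (m:ℚ)^5*(-448))) * h1c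
    - ((-1:ℚ)^k * 6*(3*(m:ℚ)+1)*(3*(m:ℚ)+2)) * h2c

lemma S_rec (m : ℕ) :
    ((m:ℚ)+1)^2 * S (2*m+2) + 3*(3*(m:ℚ)+1)*(3*(m:ℚ)+2) * S (2*m) = 0 := by
  have tel := Finset.sum_range_sub (gw m) (2*m+3)
  have hg0 : gw m 0 = 0 := by simp [gw]
  have hgtop : gw m (2*m+3) = 0 := by
    rw [gw, Nat.choose_eq_zero_of_lt (show 2*m+2 < 2*m+3 by omega)]
    push_cast
    ring
  have hsum : ∑ k ∈ range (2*m+3),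
      (2*(((2*(m:ℚ)+2)*(2*(m:ℚ)+1))^3)*(((m:ℚ)+1)^2 * (-1:ℚ)^k * (((2*m+2).choose k : ℚ))^3
        + 3*(3*(m:ℚ)+1)*(3*(m:ℚ)+2) * (-1:ℚ)^k * (((2*m).choose k : ℚ))^3)) = 0 := by
    rw [Finset.sum_congr rfl (fun k _ => key m k), tel, hg0, hgtop, sub_zero]
  have e1 : ∑ k ∈ range (2*m+3), (-1:ℚ)^k * (((2*m+2).choose k : ℚ))^3 = S (2*m+2) := by
    rw [S, show 2*m+2+1 = 2*m+3 by omega]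
  have e2 : ∑ k ∈ range (2*m+3), (-1:ℚ)^k * (((2*m).choose k : ℚ))^3 = S (2*m) := by
    rw [S, show 2*m+3 = (2*m+1)+1+1 by omega, Finset.sum_range_succ, Finset.sum_range_succ,
      Nat.choose_eq_zero_of_lt (show 2*m < 2*m+1 by omega),
      Nat.choose_eq_zero_of_lt (show 2*m < 2*m+1+1 by omega)]
    push_cast
    ring
  have final : 2*(((2*(m:ℚ)+2)*(2*(m:ℚ)+1))^3)*(((m:ℚ)+1)^2 * S (2*m+2)
        + 3*(3*(m:ℚ)+1)*(3*(m:ℚ)+2) * S (2*m)) = 0 := by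
    calc 2*(((2*(m:ℚ)+2)*(2*(m:ℚ)+1))^3)*(((m:ℚ)+1)^2 * S (2*m+2)
        + 3*(3*(m:ℚ)+1)*(3*(m:ℚ)+2) * S (2*m))
        = (2*(((2*(m:ℚ)+2)*(2*(m:ℚ)+1))^3)*((m:ℚ)+1)^2) * S (2*m+2)
          + (2*(((2*(m:ℚ)+2)*(2*(m:ℚ)+1))^3)*(3*(3*(m:ℚ)+1)*(3*(m:ℚ)+2))) * S (2*m) := by ring
      _ = (∑ k ∈ range (2*m+3), (2*(((2*(m:ℚ)+2)*(2*(m:ℚ)+1))^3)*((m:ℚ)+1)^2)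
            * ((-1:ℚ)^k * (((2*m+2).choose k : ℚ))^3))
          + (∑ k ∈ range (2*m+3), (2*(((2*(m:ℚ)+2)*(2*(m:ℚ)+1))^3)*(3*(3*(m:ℚ)+1)*(3*(m:ℚ)+2)))
            * ((-1:ℚ)^k * (((2*m).choose k : ℚ))^3)) := by
          rw [← e1, ← e2, Finset.mul_sum, Finset.mul_sum]
      _ = ∑ k ∈ range (2*m+3), ((2*(((2*(m:ℚ)+2)*(2*(m:ℚ)+1))^3)*((m:ℚ)+1)^2)
            * ((-1:ℚ)^k * (((2*m+2).choose k : ℚ))^3)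
          + (2*(((2*(m:ℚ)+2)*(2*(m:ℚ)+1))^3)*(3*(3*(m:ℚ)+1)*(3*(m:ℚ)+2)))
            * ((-1:ℚ)^k * (((2*m).choose k : ℚ))^3)) := Finset.sum_add_distrib.symm
      _ = ∑ k ∈ range (2*m+3),
          (2*(((2*(m:ℚ)+2)*(2*(m:ℚ)+1))^3)*(((m:ℚ)+1)^2 * (-1:ℚ)^k * (((2*m+2).choose k : ℚ))^3
            + 3*(3*(m:ℚ)+1)*(3*(m:ℚ)+2) * (-1:ℚ)^k * (((2*m).choose k : ℚ))^3)) :=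
          Finset.sum_congr rfl fun k _ => by ring
      _ = 0 := hsum
  have hD : (2*(((2*(m:ℚ)+2)*(2*(m:ℚ)+1))^3)) ≠ 0 := by positivity
  exact (mul_eq_zero.mp final).resolve_left hD

lemma S_even (m : ℕ) : S (2*m) = (-1:ℚ)^m * ((3*m).factorial : ℚ) / ((m.factorial : ℚ))^3 := by
  induction m with
  | zero => simp [S]
  | succ m ih =>
    have hrec := S_rec m
    rw [ih] at hrec
    have hm1 : ((m:ℚ)+1) ≠ 0 := by positivity
    have hf : ((m.factorial : ℚ)) ≠ 0 := Nat.cast_ne_zero.mpr m.factorial_ne_zero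
    have hfac : ((3*(m+1)).factorial : ℚ)
        = (3*(m:ℚ)+3)*(3*(m:ℚ)+2)*(3*(m:ℚ)+1)*((3*m).factorial : ℚ) := by
      rw [show 3*(m+1) = 3*m+1+1+1 by omega, Nat.factorial_succ, Nat.factorial_succ,
        Nat.factorial_succ]
      push_cast
      ring
    have hfac2 : (((m+1).factorial : ℚ)) = ((m:ℚ)+1) * (m.factorial : ℚ) := by
      rw [Nat.factorial_succ]
      push_cast
      ring
    field_simp at hrec
    rw [show 2*(m+1) = 2*m+2 by omega]
    have hS2 : S (2*m+2) = (3*(3*(m:ℚ)+1)*(3*(m:ℚ)+2) * (-1:ℚ)^(m+1) * ((3*m).factorial:ℚ))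
        / (((m:ℚ)+1)^2 * ((m.factorial:ℚ))^3) := by
      rw [eq_div_iff (by positivity)]
      simp only [pow_succ]
      linear_combination hrec
    rw [hS2, hfac, hfac2]
    simp only [pow_succ]
    field_simp

/-- The constant term of `φⁿ` vanishes for odd `n` and equals
`(−1)^m (3m)!/(m!)³` for `n = 2m`. -/
theorem stmt_10 (m : ℕ) :
    (phi ^ (2 * m + 1)).coeff (0, 0) = 0 ∧
    (phi ^ (2 * m)).coeff (0, 0) =
      (-1) ^ m * (Nat.factorial (3 * m) : ℚ) / ((Nat.factorial m : ℚ)) ^ 3 := by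
  constructor
  · rw [coeff_eq (2*m+1), S_odd m]
    ring
  · rw [coeff_eq (2*m), S_even m]
    have h1 : (-1:ℚ)^(2*m) = 1 := Even.neg_one_pow ⟨m, by ring⟩
    rw [h1, one_mul]
end
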